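/- In the braid group B(Ã_n), with y = σ_j ⋯ σ_2 σ_1 σ_{j+1} ⋯ σ_{n−1} σ_n a_{n+1} (2 ≤ j ≤ n−1) and a_n = σ_n a_{n+1} σ_n^{-1}, one has y^{n−j+1} = (σ_j ⋯ σ_2 σ_1 σ_{j+1} ⋯ σ_{n−1} a_n)^{n−j} · σ_j σ_{j+1} ⋯ σ_{n−1} · (σ_n σ_{n−1} ⋯ σ_2 σ_1 a_{n+1}). -/

import Mathlib

/-- The defining relators of the affine braid group of type `Ãₙ`: generators indexed by
`Fin (n+1)` arranged in a cycle; cyclically adjacent generators satisfy the braid relation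
`xyx = yxy`, all other pairs commute. -/
def affineBraidRels (n : ℕ) : Set (FreeGroup (Fin (n + 1))) :=
  { r | ∃ i j : Fin (n + 1),
      ((i - j = 1 ∨ j - i = 1) ∧
        r = FreeGroup.of i * FreeGroup.of j * FreeGroup.of i *
          (FreeGroup.of j * FreeGroup.of i * FreeGroup.of j)⁻¹) ∨
      (i ≠ j ∧ ¬(i - j = 1 ∨ j - i = 1) ∧
        r = FreeGroup.of i * FreeGroup.of j * (FreeGroup.of j * FreeGroup.of i)⁻¹) }

/-- The affine braid group `B(Ãₙ)`. -/
def AffineBraidGroup (n : ℕ) : Type := PresentedGroup (affineBraidRels n)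

instance (n : ℕ) : Group (AffineBraidGroup n) := by
  unfold AffineBraidGroup; infer_instance

/-- The generator with 1-based subscript `k`: `σ_k` for `1 ≤ k ≤ n`, and `a_{n+1}` for
`k = n + 1`. -/
def bgen (n : ℕ) (k : ℕ) : AffineBraidGroup n :=
  PresentedGroup.of (Fin.ofNat (n + 1) (k - 1))

/-- The product of the generators with the given (1-based) subscripts. -/
def bword (n : ℕ) (l : List ℕ) : AffineBraidGroup n := (l.map (bgen n)).prod

/-- The decreasing word `[i, i-1, ..., j]` of (1-based) generator subscripts. -/
def decW (i j : ℕ) : List ℕ := (List.range' j (i + 1 - j)).reverse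

/-- The increasing word `[i, i+1, ..., j]` of (1-based) generator subscripts. -/
def incW (i j : ℕ) : List ℕ := List.range' i (j + 1 - i)

/-!
Conjugation by `y` lowers subscripts, `y⁻¹ σ_{i+1} y = σ_i` for `j < i < n`, hence
`y⁻ⁱ σₙ yⁱ = σ_{n-i}`. In any group `yᵏ = (y t⁻¹)ᵏ · ∏_{i<k} y⁻ⁱ t yⁱ`; for `t = σₙ` and
`k = n - j` the product is `σₙ σ_{n-1} ⋯ σ_{j+1}`, while `y σₙ⁻¹ = σⱼ ⋯ σ₁ σ_{j+1} ⋯ σ_{n-1} aₙ`.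
One more factor `y` leaves `σₙ ⋯ σ₁ · σ_{j+1} ⋯ σₙ · a_{n+1}`, and `σₙ ⋯ σ₁ σ_{i+1} = σᵢ σₙ ⋯ σ₁`
moves `σ_{j+1} ⋯ σₙ` to the front as `σⱼ ⋯ σ_{n-1}`.
-/

theorem SemiconjBy.list_prod_map {M ι : Type*} [Monoid M] {c : M} {f g : ι → M} (l : List ι)
    (h : ∀ i ∈ l, SemiconjBy c (f i) (g i)) : SemiconjBy c (l.map f).prod (l.map g).prod := by
  induction l with
  | nil => exact SemiconjBy.one_right c
  | cons i l ih =>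
    simp only [List.map_cons, List.prod_cons]
    exact (h i List.mem_cons_self).mul_right (ih fun k hk => h k (List.mem_cons_of_mem i hk))

theorem semiconjBy_mul_mul_of_braid {M : Type*} [Monoid M] {x y L R : M}
    (hxy : x * y * x = y * x * y) (hL : Commute L y) (hR : Commute R x) :
    SemiconjBy (L * (x * y) * R) x y :=
  (SemiconjBy.mul_left hL (hxy.trans (mul_assoc y x y))).mul_left hR

theorem pow_eq_mul_inv_pow_mul_prod_conj {G : Type*} [Group G] (y t : G) (k : ℕ) :
    y ^ k = (y * t⁻¹) ^ k * ((List.range k).map fun i => (y ^ i)⁻¹ * t * y ^ i).prod := by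
  induction k with
  | zero => simp
  | succ k ih =>
    calc y ^ (k + 1) = y * t⁻¹ * y ^ k * ((y ^ k)⁻¹ * t * y ^ k) := by group
      _ = y * t⁻¹ * ((y * t⁻¹) ^ k * ((List.range k).map fun i => (y ^ i)⁻¹ * t * y ^ i).prod) *
          ((y ^ k)⁻¹ * t * y ^ k) := by rw [← ih]
      _ = _ := by
        rw [List.range_succ, List.map_append, List.prod_append, pow_succ' (y * t⁻¹)]
        simp only [List.map_singleton, List.prod_singleton, mul_assoc]

theorem inv_pow_mul_mul_pow_eq_of_semiconjBy {G : Type*} [Group G] {y : G} {g : ℕ → G}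
    {a b : ℕ} (h : ∀ l, a ≤ l → l < b → SemiconjBy y (g l) (g (l + 1))) {i : ℕ}
    (hi : i ≤ b - a) : (y ^ i)⁻¹ * g b * y ^ i = g (b - i) := by
  induction i with
  | zero => simp
  | succ i ih =>
    have hstep := h (b - (i + 1)) (by omega) (by omega)
    rw [show b - (i + 1) + 1 = b - i by omega] at hstep
    calc (y ^ (i + 1))⁻¹ * g b * y ^ (i + 1) = y⁻¹ * ((y ^ i)⁻¹ * g b * y ^ i) * y := by group
      _ = g (b - (i + 1)) := by rw [ih (by omega), mul_assoc, ← hstep.eq, inv_mul_cancel_left]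

namespace AffineBraidGroup

variable {n : ℕ}

@[simp]
theorem bword_append (l₁ l₂ : List ℕ) : bword n (l₁ ++ l₂) = bword n l₁ * bword n l₂ := by
  simp [bword]

@[simp]
theorem bword_cons (k : ℕ) (l : List ℕ) : bword n (k :: l) = bgen n k * bword n l := by
  simp [bword]

@[simp]
theorem bword_singleton (k : ℕ) : bword n [k] = bgen n k := by
  simp [bword]

theorem commute_bword_left {l : List ℕ} {x : AffineBraidGroup n}
    (h : ∀ k ∈ l, Commute (bgen n k) x) : Commute (bword n l) x :=
  Commute.list_prod_left _ _ (by simpa [bword] using h)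

theorem mem_incW {a b i : ℕ} : i ∈ incW a b ↔ a ≤ i ∧ i ≤ b := by
  simp only [incW, List.mem_range'_1]; omega

theorem decW_eq_reverse (a b : ℕ) : decW b a = (incW a b).reverse := rfl

theorem mem_decW {a b i : ℕ} : i ∈ decW b a ↔ a ≤ i ∧ i ≤ b := by
  rw [decW_eq_reverse, List.mem_reverse, mem_incW]

theorem incW_append {a b c : ℕ} (hac : a ≤ c + 1) (hcb : c ≤ b) :
    incW a b = incW a c ++ incW (c + 1) b := by
  have h := List.range'_append_1 (s := a) (m := c + 1 - a) (n := b - c)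
  rw [show a + (c + 1 - a) = c + 1 by omega, show c + 1 - a + (b - c) = b + 1 - a by omega] at h
  simp only [incW, ← h, show b + 1 - (c + 1) = b - c by omega]

theorem decW_append {a b c : ℕ} (hac : a ≤ c + 1) (hcb : c ≤ b) :
    decW b a = decW b (c + 1) ++ decW c a := by
  simp only [decW_eq_reverse, incW_append hac hcb, List.reverse_append]

theorem incW_cons {a b : ℕ} (hab : a ≤ b) : incW a b = a :: incW (a + 1) b := by
  rw [incW, incW, show b + 1 - a = b + 1 - (a + 1) + 1 by omega, List.range'_succ]

theorem incW_add_one (a b : ℕ) : incW (a + 1) (b + 1) = (incW a b).map (· + 1) := by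
  simp only [incW, Nat.add_sub_add_right, List.range'_succ_left]

theorem decW_eq_map_range (a b : ℕ) : decW b a = (List.range (b + 1 - a)).map (b - ·) := by
  rw [decW, List.reverse_range']
  exact List.map_congr_left fun i hi => by simp only [List.mem_range] at hi; omega

theorem ofNat_sub_ofNat_eq_one_iff {k l : ℕ} (hk : 1 ≤ k) (hkn : k ≤ n + 1) (hl : 1 ≤ l)
    (hln : l ≤ n + 1) :
    (Fin.ofNat (n + 1) (k - 1) - Fin.ofNat (n + 1) (l - 1) = 1) ↔
      k = l + 1 ∨ (k = 1 ∧ l = n + 1) := by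
  rw [sub_eq_iff_eq_add', Fin.ext_iff, Fin.val_add_one]
  simp only [Fin.ext_iff, Fin.val_ofNat, Fin.val_last,
    Nat.mod_eq_of_lt (show k - 1 < n + 1 by omega), Nat.mod_eq_of_lt (show l - 1 < n + 1 by omega)]
  split_ifs <;> omega

theorem bgen_braid {k : ℕ} (hk : 1 ≤ k) (hkn : k ≤ n) :
    bgen n k * bgen n (k + 1) * bgen n k = bgen n (k + 1) * bgen n k * bgen n (k + 1) := by
  have hadj := (ofNat_sub_ofNat_eq_one_iff (n := n) (k := k + 1) (l := k) (by omega) (by omega)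
    hk (by omega)).2 (Or.inl rfl)
  have h := PresentedGroup.mk_eq_mk_of_mul_inv_mem (rels := affineBraidRels n)
    ⟨_, _, Or.inl ⟨Or.inr hadj, rfl⟩⟩
  simp only [map_mul] at h
  exact h

theorem bgen_commute {k l : ℕ} (hk : 1 ≤ k) (hkl : k + 2 ≤ l) (hln : l ≤ n + 1)
    (hcyc : k = 1 → l ≤ n) : Commute (bgen n k) (bgen n l) := by
  have hne : Fin.ofNat (n + 1) (k - 1) ≠ Fin.ofNat (n + 1) (l - 1) := by
    rw [Ne, Fin.ext_iff]
    simp only [Fin.val_ofNat, Nat.mod_eq_of_lt (show k - 1 < n + 1 by omega),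
      Nat.mod_eq_of_lt (show l - 1 < n + 1 by omega)]
    omega
  have hfar : ¬(Fin.ofNat (n + 1) (k - 1) - Fin.ofNat (n + 1) (l - 1) = 1 ∨
      Fin.ofNat (n + 1) (l - 1) - Fin.ofNat (n + 1) (k - 1) = 1) := by
    rintro (h | h)
    · rw [ofNat_sub_ofNat_eq_one_iff hk (by omega) (by omega) hln] at h; omega
    · rw [ofNat_sub_ofNat_eq_one_iff (by omega) hln hk (by omega)] at h; omega
  exact PresentedGroup.mk_eq_mk_of_mul_inv_mem (rels := affineBraidRels n)
    ⟨_, _, Or.inr ⟨hne, hfar, rfl⟩⟩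

theorem incW_eq_append_pair {a b i : ℕ} (ha : 1 ≤ a) (hai : a ≤ i) (hib : i < b) :
    incW a b = incW a (i - 1) ++ [i, i + 1] ++ incW (i + 2) b := by
  rw [incW_append (c := i - 1) (by omega) (by omega), Nat.sub_add_cancel (by omega : 1 ≤ i),
    incW_cons (a := i) (by omega), incW_cons (a := i + 1) (by omega)]
  simp

theorem semiconjBy_bword_incW {a b i : ℕ} (ha : 1 ≤ a) (hai : a ≤ i) (hib : i < b) (hbn : b ≤ n) :
    SemiconjBy (bword n (incW a b)) (bgen n i) (bgen n (i + 1)) := by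
  rw [incW_eq_append_pair ha hai hib, bword_append, bword_append, bword_cons, bword_singleton]
  refine semiconjBy_mul_mul_of_braid (bgen_braid (by omega) (by omega)) ?_ ?_
  all_goals refine commute_bword_left fun k hk => ?_
  all_goals rw [mem_incW] at hk
  · exact bgen_commute (by omega) (by omega) (by omega) (by omega)
  · exact (bgen_commute (by omega) (by omega) (by omega) (by omega)).symm

theorem decW_eq_append_pair {a b i : ℕ} (ha : 1 ≤ a) (hai : a ≤ i) (hib : i < b) :
    decW b a = decW b (i + 2) ++ [i + 1, i] ++ decW (i - 1) a := by
  simp [decW_eq_reverse, incW_eq_append_pair ha hai hib]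

theorem semiconjBy_bword_decW {a b i : ℕ} (ha : 1 ≤ a) (hai : a ≤ i) (hib : i < b) (hbn : b ≤ n) :
    SemiconjBy (bword n (decW b a)) (bgen n (i + 1)) (bgen n i) := by
  rw [decW_eq_append_pair ha hai hib, bword_append, bword_append, bword_cons, bword_singleton]
  refine semiconjBy_mul_mul_of_braid (bgen_braid (by omega) (by omega)).symm ?_ ?_
  all_goals refine commute_bword_left fun k hk => ?_
  all_goals rw [mem_decW] at hk
  · exact (bgen_commute (by omega) (by omega) (by omega) (by omega)).symm
  · exact bgen_commute (by omega) (by omega) (by omega) (by omega)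

def y (n j : ℕ) : AffineBraidGroup n := bword n (decW j 1 ++ incW (j + 1) n ++ [n + 1])

theorem semiconjBy_y {j l : ℕ} (hj : 1 ≤ j) (hjl : j < l) (hln : l < n) :
    SemiconjBy (y n j) (bgen n l) (bgen n (l + 1)) := by
  rw [y, bword_append, bword_append, bword_singleton]
  have hD : Commute (bword n (decW j 1)) (bgen n (l + 1)) :=
    commute_bword_left fun k hk => by
      rw [mem_decW] at hk
      exact bgen_commute (by omega) (by omega) (by omega) (by omega)
  have ha : Commute (bgen n (n + 1)) (bgen n l) :=
    (bgen_commute (by omega) (by omega) le_rfl (by omega)).symm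
  have hI : SemiconjBy (bword n (incW (j + 1) n)) (bgen n l) (bgen n (l + 1)) :=
    semiconjBy_bword_incW (by omega) hjl hln le_rfl
  exact (SemiconjBy.mul_left hD hI).mul_left ha

theorem bword_decW_mul_y {j : ℕ} (hj : 1 ≤ j) (hjn : j < n) :
    bword n (decW n (j + 1)) * y n j =
      bword n (incW j (n - 1)) * bword n (decW n 1 ++ [n + 1]) := by
  have hslide : SemiconjBy (bword n (decW n 1)) (bword n (incW (j + 1) n))
      (bword n (incW j (n - 1))) := by
    have h := SemiconjBy.list_prod_map (c := bword n (decW n 1)) (f := fun i => bgen n (i + 1))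
      (g := bgen n) (incW j (n - 1)) fun i hi => by
        rw [mem_incW] at hi
        exact semiconjBy_bword_decW le_rfl (by omega) (by omega) le_rfl
    have hshift : incW (j + 1) n = (incW j (n - 1)).map (· + 1) := by
      rw [← incW_add_one, Nat.sub_add_cancel (by omega)]
    simp only [hshift, bword, List.map_map]
    exact h
  calc bword n (decW n (j + 1)) * y n j
      = bword n (decW n 1) * bword n (incW (j + 1) n) * bgen n (n + 1) := by
        rw [y, decW_append (a := 1) (c := j) (b := n) (by omega) hjn.le]
        simp only [bword_append, bword_singleton, mul_assoc]
    _ = _ := by rw [hslide.eq, bword_append, bword_singleton, mul_assoc]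

theorem bword_mul_conj_eq_y_mul_inv {j : ℕ} (hjn : j < n) :
    bword n (decW j 1 ++ incW (j + 1) (n - 1)) * (bgen n n * bgen n (n + 1) * (bgen n n)⁻¹) =
      y n j * (bgen n n)⁻¹ := by
  rw [y, incW_append (c := n - 1) (b := n) (by omega) (by omega), Nat.sub_add_cancel (by omega)]
  simp [incW, bword, mul_assoc]

theorem y_pow {j : ℕ} (hj : 1 ≤ j) (hjn : j < n) :
    y n j ^ (n - j) = (y n j * (bgen n n)⁻¹) ^ (n - j) * bword n (decW n (j + 1)) := by
  have hconj : ∀ i ∈ List.range (n - j), (y n j ^ i)⁻¹ * bgen n n * y n j ^ i = bgen n (n - i) :=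
    fun i hi => inv_pow_mul_mul_pow_eq_of_semiconjBy (g := bgen n) (a := j + 1) (b := n)
      (fun l hjl hln => semiconjBy_y hj hjl hln) (by simp only [List.mem_range] at hi; omega)
  rw [pow_eq_mul_inv_pow_mul_prod_conj (y n j) (bgen n n), List.map_congr_left hconj, bword,
    decW_eq_map_range, List.map_map, Nat.add_sub_add_right]
  rfl

end AffineBraidGroup

theorem braid_power_formula_full_general (n j : ℕ) (hj : 2 ≤ j) (hjn : j ≤ n - 1) :
    (bword n (decW j 1 ++ incW (j + 1) n ++ [n + 1])) ^ (n - j + 1) =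
      (bword n (decW j 1 ++ incW (j + 1) (n - 1)) *
        (bgen n n * bgen n (n + 1) * (bgen n n)⁻¹)) ^ (n - j) *
      bword n (incW j (n - 1)) *
      bword n (decW n 1 ++ [n + 1]) := by
  have hj1 : 1 ≤ j := by omega
  have hjn' : j < n := by omega
  rw [← AffineBraidGroup.y, AffineBraidGroup.bword_mul_conj_eq_y_mul_inv hjn', pow_succ,
    AffineBraidGroup.y_pow hj1 hjn', mul_assoc, AffineBraidGroup.bword_decW_mul_y hj1 hjn',
    mul_assoc]

/-- In `B(Ãₙ)`, with `y = σⱼ ⋯ σ₂σ₁ σ_{j+1} ⋯ σₙ₋₁σₙ a_{n+1}` (`2 ≤ j ≤ n - 1`) and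
`aₙ = σₙ a_{n+1} σₙ⁻¹`, one has
`y^{n-j+1} = (σⱼ ⋯ σ₂σ₁ σ_{j+1} ⋯ σₙ₋₁ aₙ)^{n-j} · σⱼσ_{j+1} ⋯ σₙ₋₁ · (σₙσₙ₋₁ ⋯ σ₂σ₁ a_{n+1})`. -/
theorem braid_power_formula_full (n j : ℕ) (hj : 2 ≤ j) (hjn : j ≤ n - 1) (hn : 2 ≤ n) :
    (bword n (decW j 1 ++ incW (j + 1) n ++ [n + 1])) ^ (n - j + 1) =
      (bword n (decW j 1 ++ incW (j + 1) (n - 1)) *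
        (bgen n n * bgen n (n + 1) * (bgen n n)⁻¹)) ^ (n - j) *
      bword n (incW j (n - 1)) *
      bword n (decW n 1 ++ [n + 1]) :=
  braid_power_formula_full_general n j hj hjn
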